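/- arXiv:1511.06794 — 4 statements merged into one kernel-verified Lean document; each statement's English description precedes it below -/
import Mathlib

section
/- Every connected simple graph that is edge-transitive but not vertex-transitive is bipartite. -/
/-- `C` is the edge set of a cycle of length 4 in `X`. -/
def IsC4 {V : Type*} (X : SimpleGraph V) (C : Set (Sym2 V)) : Prop :=
  ∃ a b c d : V, a ≠ b ∧ a ≠ c ∧ a ≠ d ∧ b ≠ c ∧ b ≠ d ∧ c ≠ d ∧
    X.Adj a b ∧ X.Adj b c ∧ X.Adj c d ∧ X.Adj d a ∧
    C = {s(a, b), s(b, c), s(c, d), s(d, a)}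

/-- The number of 4-cycles of `X` containing the edge `e`. -/
noncomputable def cycle4Count {V : Type*} (X : SimpleGraph V) (e : Sym2 V) : ℕ :=
  Nat.card {C : Set (Sym2 V) // IsC4 X C ∧ e ∈ C}

/-- The automorphism group of `X` acts transitively on the edges of `X`. -/
def EdgeTransitive {V : Type*} (X : SimpleGraph V) : Prop :=
  ∀ e ∈ X.edgeSet, ∀ f ∈ X.edgeSet, ∃ g : X ≃g X, Sym2.map g e = f

/-- Every vertex of `X` has exactly 4 neighbours. -/
def FourRegular {V : Type*} (X : SimpleGraph V) : Prop :=
  ∀ v : V, Nat.card (X.neighborSet v) = 4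

/-- The automorphism group of `X` acts transitively on the vertices of `X`. -/
def VertexTransitive {V : Type*} (X : SimpleGraph V) : Prop :=
  ∀ u v : V, ∃ g : X ≃g X, g u = v

theorem stmt1 {V : Type*} (X : SimpleGraph V) (hconn : X.Connected)
    (het : EdgeTransitive X) (hnvt : ¬ VertexTransitive X) :
    ∃ A : Set V, ∀ u v : V, X.Adj u v → (u ∈ A ↔ v ∉ A) := by
  by_cases hV : ∃ a b : V, a ≠ b
  · obtain ⟨a, b, hab⟩ := hV
    -- every vertex has a neighbor
    have hnb : ∀ v : V, ∃ w, X.Adj v w := by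
      intro v
      obtain ⟨w, hvw⟩ : ∃ w : V, v ≠ w := by
        by_cases h : v = a
        · exact ⟨b, h ▸ hab⟩
        · exact ⟨a, h⟩
      obtain ⟨p⟩ := hconn.preconnected v w
      cases p with
      | nil => exact absurd rfl hvw
      | cons h q => exact ⟨_, h⟩
    obtain ⟨y0, hay0⟩ := hnb a
    -- every vertex is in orbit of a or orbit of y0
    have horb : ∀ v : V, (∃ g : X ≃g X, g a = v) ∨ (∃ g : X ≃g X, g y0 = v) := by
      intro v
      obtain ⟨w, hvw⟩ := hnb v
      obtain ⟨g, hg⟩ := het s(a, y0) (X.mem_edgeSet.2 hay0)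
        s(v, w) (X.mem_edgeSet.2 hvw)
      rw [Sym2.map_pair_eq, Sym2.eq_iff] at hg
      rcases hg with ⟨h1, _⟩ | ⟨_, h2⟩
      · exact Or.inl ⟨g, h1⟩
      · exact Or.inr ⟨g, h2⟩
    -- orbits are disjoint
    have hdisj : ∀ v : V, (∃ g : X ≃g X, g a = v) → ¬ (∃ g : X ≃g X, g y0 = v) := by
      intro v ⟨g, hg⟩ ⟨h, hh⟩
      apply hnvt
      -- y0 is in orbit of a, so every vertex is in orbit of a
      have hy0 : ∃ k : X ≃g X, k a = y0 := by
        refine ⟨g.trans h.symm, ?_⟩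
        show h.symm (g a) = y0
        rw [hg, ← hh]
        exact h.symm_apply_apply y0
      have hall : ∀ v : V, ∃ k : X ≃g X, k a = v := by
        intro v
        rcases horb v with hv | ⟨k, hk⟩
        · exact hv
        · obtain ⟨k', hk'⟩ := hy0
          exact ⟨k'.trans k, by show k (k' a) = v; rw [hk', hk]⟩
      intro u v
      obtain ⟨ku, hku⟩ := hall u
      obtain ⟨kv, hkv⟩ := hall v
      refine ⟨ku.symm.trans kv, ?_⟩
      show kv (ku.symm u) = v
      rw [← hku, ku.symm_apply_apply, hkv]
    refine ⟨{v | ∃ g : X ≃g X, g a = v}, ?_⟩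
    intro u v huv
    obtain ⟨g, hg⟩ := het s(a, y0) (X.mem_edgeSet.2 hay0)
      s(u, v) (X.mem_edgeSet.2 huv)
    rw [Sym2.map_pair_eq, Sym2.eq_iff] at hg
    constructor
    · intro hu
      rcases hg with ⟨h1, h2⟩ | ⟨h1, h2⟩
      · exact fun hv => hdisj v hv ⟨g, h2⟩
      · exact fun _ => hdisj u hu ⟨g, h2⟩
    · intro hv
      rcases hg with ⟨h1, h2⟩ | ⟨h1, h2⟩
      · exact ⟨g, h1⟩
      · exact absurd ⟨g, h1⟩ hv
  · exfalso
    apply hnvt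
    intro u v
    have : u = v := by
      by_contra h
      exact hV ⟨u, v, h⟩
    exact ⟨RelIso.refl _, this⟩
end

section
/- Let H be a group acting on a 4-element set S, and suppose the induced action of H on the 2-element subsets of S has an orbit O of size 4. Then the two 2-element subsets of S not belonging to O are disjoint. -/
open Pointwise

theorem stmt12 {H S : Type*} [Group H] [MulAction H S] (hS : Nat.card S = 4)
    (A : Set S) (hA : A.ncard = 2)
    (O : Set (Set S)) (hO : O = MulAction.orbit H A) (hO4 : O.ncard = 4) :
    ∀ B C : Set S, B.ncard = 2 → C.ncard = 2 → B ∉ O → C ∉ O → B ≠ C →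
      Disjoint B C := by
  intro B C hB hC hBO hCO hBC
  have hfinS : Finite S := Nat.finite_of_card_ne_zero (by omega)
  have := Fintype.ofFinite S
  classical
  -- T2 : set of all 2-element subsets
  set T2 : Set (Set S) := {X : Set S | X.ncard = 2} with hT2
  -- mapping into powersetCard
  have hT2card : T2.ncard ≤ 6 := by
    have hf : Set.InjOn (fun X : Set S => X.toFinset) T2 := by
      intro X _ Y _ h
      exact Set.toFinset_inj.mp h
    have himg : (fun X : Set S => X.toFinset) '' T2 ⊆
        ↑(Finset.univ.powersetCard 2 : Finset (Finset S)) := by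
      rintro _ ⟨X, hX, rfl⟩
      rw [Finset.mem_coe, Finset.mem_powersetCard]
      refine ⟨Finset.subset_univ _, ?_⟩
      rw [← Set.ncard_eq_toFinset_card']
      exact hX
    calc T2.ncard = ((fun X : Set S => X.toFinset) '' T2).ncard :=
          (Set.ncard_image_of_injOn hf).symm
      _ ≤ (↑(Finset.univ.powersetCard 2 : Finset (Finset S)) : Set (Finset S)).ncard := by
          apply Set.ncard_le_ncard himg (Finset.finite_toSet _)
      _ = (Finset.univ.powersetCard 2 : Finset (Finset S)).card := Set.ncard_coe_finset _
      _ = 6 := by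
          rw [Finset.card_powersetCard, Finset.card_univ, ← Nat.card_eq_fintype_card, hS]
          decide
  -- elements of O are 2-element sets
  have hOsub : O ⊆ T2 := by
    rintro X hX
    rw [hO] at hX
    obtain ⟨g, rfl⟩ := hX
    show (g • A).ncard = 2
    rw [Set.ncard_smul_set]
    exact hA
  by_contra hdis
  have hBCc : C ≠ Bᶜ := by
    rintro rfl
    exact hdis disjoint_compl_right
  have hBcncard : Bᶜ.ncard = 2 := by
    have := Set.ncard_add_ncard_compl B
    omega
  -- T2 \ O = {B, C}
  have hBCmem : ({B, C} : Set (Set S)) ⊆ T2 \ O := by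
    rintro X (rfl | rfl)
    · exact ⟨hB, hBO⟩
    · exact ⟨hC, hCO⟩
  have hT2fin : T2.Finite := Set.toFinite _
  have hdiff : T2 \ O = {B, C} := by
    have h1 : (T2 \ O).ncard ≤ 2 := by
      have := Set.ncard_diff_add_ncard_of_subset hOsub hT2fin
      omega
    have h2 : ({B, C} : Set (Set S)).ncard = 2 := Set.ncard_pair hBC
    exact (Set.eq_of_subset_of_ncard_le hBCmem (by omega) (hT2fin.subset Set.diff_subset)).symm
  -- Bᶜ ∈ O
  have hBcO : Bᶜ ∈ O := by
    by_contra h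
    have : Bᶜ ∈ T2 \ O := ⟨hBcncard, h⟩
    rw [hdiff] at this
    rcases this with h | h
    · have hBe : B = ∅ := by
        have h2 := Set.inter_compl_self B
        rw [h] at h2
        simpa using h2
      rw [hBe, Set.ncard_empty] at hB
      omega
    · exact hBCc h.symm
  -- O is the orbit of Bᶜ
  have hOorb : O = MulAction.orbit H Bᶜ := by
    rw [hO]
    rw [hO] at hBcO
    exact (MulAction.orbit_eq_iff.mpr hBcO).symm
  -- O' := complements of O = orbit of B
  set O' : Set (Set S) := compl '' O with hO'
  have hO'orb : O' = MulAction.orbit H B := by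
    ext X
    constructor
    · rintro ⟨Y, hY, rfl⟩
      rw [hOorb] at hY
      obtain ⟨g, rfl⟩ := hY
      refine ⟨g, ?_⟩
      show g • B = (g • Bᶜ)ᶜ
      rw [Set.smul_set_compl, compl_compl]
    · rintro ⟨g, rfl⟩
      refine ⟨g • Bᶜ, by rw [hOorb]; exact ⟨g, rfl⟩, ?_⟩
      show (g • Bᶜ)ᶜ = g • B
      rw [Set.smul_set_compl, compl_compl]
  have hBO' : B ∈ O' := by rw [hO'orb]; exact MulAction.mem_orbit_self B
  -- O and O' are disjoint
  have hdisjOO' : Disjoint O O' := by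
    rw [Set.disjoint_left]
    intro X hXO hXO'
    apply hBO
    rw [hO'orb] at hXO'
    rw [hO] at hXO ⊢
    rw [← MulAction.orbit_eq_iff.mpr hXO]
    rw [MulAction.orbit_eq_iff.mpr hXO']
    exact MulAction.mem_orbit_self B
  have hO'sub : O' ⊆ T2 := by
    rintro _ ⟨Y, hY, rfl⟩
    have hY2 : Y.ncard = 2 := hOsub hY
    have := Set.ncard_add_ncard_compl Y
    simp only [Set.mem_setOf_eq, hT2]
    omega
  have hO'card : O'.ncard = 4 := by
    rw [hO', Set.ncard_image_of_injective _ compl_injective, hO4]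
  have : (O ∪ O').ncard ≤ 6 :=
    le_trans (Set.ncard_le_ncard (Set.union_subset hOsub hO'sub) hT2fin) hT2card
  rw [Set.ncard_union_eq hdisjOO' (hT2fin.subset hOsub) (hT2fin.subset hO'sub), hO4, hO'card]
    at this
  omega
end

section
/- Let H be a subgroup of the symmetric group on {a,b,c,d} that acts transitively on the set O = {{a,b},{b,c},{c,d},{a,d}} of 2-element subsets and maps O to itself. Then H contains the double transposition (a c)(b d), and H is one of: the dihedral group generated by (a b c d) and (a c), the cyclic group generated by (a b c d), or the Klein four-group generated by (a c) and (b d). -/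
open Pointwise

abbrev stmt13Pq (g : Equiv.Perm (Fin 4)) : Prop :=
  ∀ x y : Fin 4, ((x,y) = (0,1) ∨ (x,y) = (1,2) ∨ (x,y) = (2,3) ∨ (x,y) = (0,3)) →
    ((g x = 0 ∧ g y = 1 ∨ g x = 1 ∧ g y = 0) ∨ (g x = 1 ∧ g y = 2 ∨ g x = 2 ∧ g y = 1) ∨
     (g x = 2 ∧ g y = 3 ∨ g x = 3 ∧ g y = 2) ∨ (g x = 0 ∧ g y = 3 ∨ g x = 3 ∧ g y = 0))

abbrev stmt13vals (g : Equiv.Perm (Fin 4)) (a b c d : Fin 4) : Prop :=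
  g 0 = a ∧ g 1 = b ∧ g 2 = c ∧ g 3 = d

set_option synthInstance.maxHeartbeats 1000000 in
set_option synthInstance.maxSize 2048 in
set_option maxHeartbeats 4000000 in
lemma stmt13D4cases : ∀ g : Equiv.Perm (Fin 4), stmt13Pq g →
    stmt13vals g 0 1 2 3 ∨ stmt13vals g 1 2 3 0 ∨ stmt13vals g 2 3 0 1 ∨ stmt13vals g 3 0 1 2 ∨
    stmt13vals g 2 1 0 3 ∨ stmt13vals g 0 3 2 1 ∨ stmt13vals g 1 0 3 2 ∨ stmt13vals g 3 2 1 0 := by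
  decide

lemma stmt13eq_of_vals (g h : Equiv.Perm (Fin 4)) (a b c d : Fin 4)
    (hg : stmt13vals g a b c d) (hh : stmt13vals h a b c d) : g = h := by
  apply Equiv.ext; intro x
  fin_cases x
  · exact hg.1.trans hh.1.symm
  · exact hg.2.1.trans hh.2.1.symm
  · exact hg.2.2.1.trans hh.2.2.1.symm
  · exact hg.2.2.2.trans hh.2.2.2.symm

lemma stmt13smul_pair (g : Equiv.Perm (Fin 4)) (x y : Fin 4) :
    g • ({x, y} : Set (Fin 4)) = {g x, g y} := by
  rw [Set.smul_set_insert, Set.smul_set_singleton]; rfl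

theorem stmt13 (H : Subgroup (Equiv.Perm (Fin 4)))
    (O : Set (Set (Fin 4)))
    (hO : O = {{0, 1}, {1, 2}, {2, 3}, {0, 3}})
    (hmaps : ∀ g ∈ H, ∀ A ∈ O, g • A ∈ O)
    (htrans : ∀ A ∈ O, ∀ B ∈ O, ∃ g ∈ H, g • A = B) :
    (Equiv.swap (0 : Fin 4) 2 * Equiv.swap (1 : Fin 4) 3) ∈ H ∧
    (H = Subgroup.closure {finRotate 4, Equiv.swap (0 : Fin 4) 2} ∨
     H = Subgroup.closure {finRotate 4} ∨
     H = Subgroup.closure {Equiv.swap (0 : Fin 4) 2, Equiv.swap (1 : Fin 4) 3}) := by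
  set r : Equiv.Perm (Fin 4) := finRotate 4 with hr_def
  set a : Equiv.Perm (Fin 4) := Equiv.swap 0 2 with ha_def
  set b : Equiv.Perm (Fin 4) := Equiv.swap 1 3 with hb_def
  set c : Equiv.Perm (Fin 4) := Equiv.swap 0 1 * Equiv.swap 2 3 with hc_def
  set d : Equiv.Perm (Fin 4) := Equiv.swap 0 3 * Equiv.swap 1 2 with hd_def
  have m01 : ({0, 1} : Set (Fin 4)) ∈ O := by rw [hO]; left; rfl
  have m12 : ({1, 2} : Set (Fin 4)) ∈ O := by rw [hO]; right; left; rfl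
  have m23 : ({2, 3} : Set (Fin 4)) ∈ O := by rw [hO]; right; right; left; rfl
  have m03 : ({0, 3} : Set (Fin 4)) ∈ O := by rw [hO]; right; right; right; rfl
  -- every element of H is one of the 8 elements of D4
  have memD4 : ∀ g ∈ H, g = 1 ∨ g = r ∨ g = r * r ∨ g = r * r * r ∨
      g = a ∨ g = b ∨ g = c ∨ g = d := by
    intro g hg
    have key : ∀ x y : Fin 4, ({x, y} : Set (Fin 4)) ∈ O →
        ((g x = 0 ∧ g y = 1 ∨ g x = 1 ∧ g y = 0) ∨ (g x = 1 ∧ g y = 2 ∨ g x = 2 ∧ g y = 1) ∨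
         (g x = 2 ∧ g y = 3 ∨ g x = 3 ∧ g y = 2) ∨ (g x = 0 ∧ g y = 3 ∨ g x = 3 ∧ g y = 0)) := by
      intro x y hxy
      have := hmaps g hg _ hxy
      rw [stmt13smul_pair, hO] at this
      simpa only [Set.mem_insert_iff, Set.mem_singleton_iff, Set.pair_eq_pair_iff] using this
    have hPq : stmt13Pq g := by
      rintro x y (h | h | h | h) <;>
        (injection h with h1 h2; subst h1; subst h2)
      · exact key 0 1 m01
      · exact key 1 2 m12
      · exact key 2 3 m23
      · exact key 0 3 m03
    rcases stmt13D4cases g hPq with h | h | h | h | h | h | h | h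
    · exact Or.inl (stmt13eq_of_vals g 1 0 1 2 3 h (by decide))
    · exact Or.inr (Or.inl (stmt13eq_of_vals g r 1 2 3 0 h (by decide)))
    · exact Or.inr (Or.inr (Or.inl (stmt13eq_of_vals g (r*r) 2 3 0 1 h (by decide))))
    · exact Or.inr (Or.inr (Or.inr (Or.inl (stmt13eq_of_vals g (r*r*r) 3 0 1 2 h (by decide)))))
    · exact Or.inr (Or.inr (Or.inr (Or.inr (Or.inl (stmt13eq_of_vals g a 2 1 0 3 h (by decide))))))
    · exact Or.inr (Or.inr (Or.inr (Or.inr (Or.inr (Or.inl (stmt13eq_of_vals g b 0 3 2 1 h (by decide)))))))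
    · exact Or.inr (Or.inr (Or.inr (Or.inr (Or.inr (Or.inr (Or.inl (stmt13eq_of_vals g c 1 0 3 2 h (by decide))))))))
    · exact Or.inr (Or.inr (Or.inr (Or.inr (Or.inr (Or.inr (Or.inr (stmt13eq_of_vals g d 3 2 1 0 h (by decide))))))))
  -- from transitivity, get an element sending {0,1} to {1,2}
  obtain ⟨g1, hg1H, hg1⟩ := htrans _ m01 _ m12
  rw [stmt13smul_pair, Set.pair_eq_pair_iff] at hg1
  have hg1' : g1 = r ∨ g1 = a := by
    rcases memD4 g1 hg1H with h | h | h | h | h | h | h | h <;> subst h <;>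
      first
        | (left; rfl)
        | (right; rfl)
        | (exact absurd hg1 (by decide))
  -- element sending {0,1} to {2,3}
  obtain ⟨g2, hg2H, hg2⟩ := htrans _ m01 _ m23
  rw [stmt13smul_pair, Set.pair_eq_pair_iff] at hg2
  have hg2' : g2 = r * r ∨ g2 = d := by
    rcases memD4 g2 hg2H with h | h | h | h | h | h | h | h <;> subst h <;>
      first
        | (left; rfl)
        | (right; rfl)
        | (exact absurd hg2 (by decide))
  -- r² ∈ H
  have hr2 : r * r ∈ H := by
    rcases hg2' with h2 | h2
    · rw [← h2]; exact hg2H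
    · rcases hg1' with h1 | h1
      · have : r ∈ H := h1 ▸ hg1H
        exact H.mul_mem this this
      · have hd : d ∈ H := h2 ▸ hg2H
        have haH : a ∈ H := h1 ▸ hg1H
        have : d * a = r := by rw [hd_def, ha_def, hr_def]; decide
        have hrH : r ∈ H := this ▸ H.mul_mem hd haH
        exact H.mul_mem hrH hrH
  have hab_r2 : a * b = r * r := by rw [ha_def, hb_def, hr_def]; decide
  refine ⟨by rw [hab_r2]; exact hr2, ?_⟩
  by_cases hr : r ∈ H
  · by_cases ha : a ∈ H
    · -- H = D4 = closure {r, a}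
      left
      apply le_antisymm
      · intro g hg
        rcases memD4 g hg with h | h | h | h | h | h | h | h <;> subst h
        · exact Subgroup.one_mem _
        · exact Subgroup.subset_closure (by left; rfl)
        · exact Subgroup.mul_mem _ (Subgroup.subset_closure (by left; rfl))
            (Subgroup.subset_closure (by left; rfl))
        · exact Subgroup.mul_mem _ (Subgroup.mul_mem _
            (Subgroup.subset_closure (by left; rfl)) (Subgroup.subset_closure (by left; rfl)))
            (Subgroup.subset_closure (by left; rfl))
        · exact Subgroup.subset_closure (by right; rfl)
        · have : b = r * r * a := by rw [hb_def, hr_def, ha_def]; decide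
          rw [this]
          exact Subgroup.mul_mem _ (Subgroup.mul_mem _
            (Subgroup.subset_closure (by left; rfl)) (Subgroup.subset_closure (by left; rfl)))
            (Subgroup.subset_closure (by right; rfl))
        · have : c = a * r := by rw [hc_def, hr_def, ha_def]; decide
          rw [this]
          exact Subgroup.mul_mem _ (Subgroup.subset_closure (by right; rfl))
            (Subgroup.subset_closure (by left; rfl))
        · have : d = r * a := by rw [hd_def, hr_def, ha_def]; decide
          rw [this]
          exact Subgroup.mul_mem _ (Subgroup.subset_closure (by left; rfl))
            (Subgroup.subset_closure (by right; rfl))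
      · rw [Subgroup.closure_le]
        rintro x (hx | hx)
        · exact hx ▸ hr
        · exact hx ▸ ha
    · -- H = C4 = closure {r}
      right; left
      apply le_antisymm
      · intro g hg
        rcases memD4 g hg with h | h | h | h | h | h | h | h <;> subst h
        · exact Subgroup.one_mem _
        · exact Subgroup.subset_closure rfl
        · exact Subgroup.mul_mem _ (Subgroup.subset_closure rfl) (Subgroup.subset_closure rfl)
        · exact Subgroup.mul_mem _ (Subgroup.mul_mem _ (Subgroup.subset_closure rfl)
            (Subgroup.subset_closure rfl)) (Subgroup.subset_closure rfl)
        · exact absurd hg ha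
        · exfalso; apply ha
          have : a = b * (r * r) := by rw [hb_def, hr_def, ha_def]; decide
          exact this ▸ H.mul_mem hg hr2
        · exfalso; apply ha
          have : a = c * (r * r * r) := by rw [hc_def, hr_def, ha_def]; decide
          exact this ▸ H.mul_mem hg (H.mul_mem (H.mul_mem hr hr) hr)
        · exfalso; apply ha
          have : a = d * r := by rw [hd_def, hr_def, ha_def]; decide
          exact this ▸ H.mul_mem hg hr
      · rw [Subgroup.closure_le]
        rintro x hx
        exact hx ▸ hr
  · have ha : a ∈ H := by
      rcases hg1' with h1 | h1
      · exact absurd (h1 ▸ hg1H) hr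
      · exact h1 ▸ hg1H
    -- H = Klein = closure {a, b}
    right; right
    have hb : b ∈ H := by
      have : b = r * r * a := by rw [hb_def, hr_def, ha_def]; decide
      exact this ▸ H.mul_mem hr2 ha
    apply le_antisymm
    · intro g hg
      rcases memD4 g hg with h | h | h | h | h | h | h | h <;> subst h
      · exact Subgroup.one_mem _
      · exact absurd hg hr
      · rw [← hab_r2]
        exact Subgroup.mul_mem _ (Subgroup.subset_closure (by left; rfl))
          (Subgroup.subset_closure (by right; rfl))
      · exfalso; apply hr
        have : r = (r * r * r) * (r * r) := by rw [hr_def]; decide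
        exact this ▸ H.mul_mem hg hr2
      · exact Subgroup.subset_closure (by left; rfl)
      · exact Subgroup.subset_closure (by right; rfl)
      · exfalso; apply hr
        have : r = a * c := by rw [hc_def, hr_def, ha_def]; decide
        exact this ▸ H.mul_mem ha hg
      · exfalso; apply hr
        have : r = d * a := by rw [hd_def, hr_def, ha_def]; decide
        exact this ▸ H.mul_mem hg ha
    · rw [Subgroup.closure_le]
      rintro x (hx | hx)
      · exact hx ▸ ha
      · exact hx ▸ hb
end

section
/- Let X be a 4-regular simple graph of girth 4 that is edge-transitive, and suppose every edge of X lies in exactly 2 cycles of length 4. Then X contains no subgraph isomorphic to K_{3,2}; equivalently, no two distinct vertices of X have 3 or more common neighbours. -/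
/-- Girth 4 implies triangle-free. -/
lemma tri_free {V : Type*} {X : SimpleGraph V} (hg : X.egirth = 4) :
    ∀ x y z : V, X.Adj x y → X.Adj y z → X.Adj z x → False := by
  intro x y z hxy hyz hzx
  set w : X.Walk x x := SimpleGraph.Walk.cons hxy
    (SimpleGraph.Walk.cons hyz (SimpleGraph.Walk.cons hzx SimpleGraph.Walk.nil)) with hw
  have hc : w.IsCycle := by
    rw [SimpleGraph.Walk.isCycle_def]
    refine ⟨⟨?_⟩, by simp [hw], ?_⟩
    · simp only [hw, SimpleGraph.Walk.edges_cons, SimpleGraph.Walk.edges_nil,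
        List.nodup_cons, List.mem_cons, List.mem_singleton, List.not_mem_nil,
        List.nodup_nil, and_true, Sym2.eq_iff, not_or, not_false_iff]
      simp [hxy.ne, hyz.ne, hzx.ne, hxy.ne', hyz.ne', hzx.ne']
    · simp only [hw, SimpleGraph.Walk.support_cons, SimpleGraph.Walk.support_nil,
        List.tail_cons, List.nodup_cons, List.mem_cons, List.mem_singleton,
        List.not_mem_nil, List.nodup_nil, not_or]
      simp [hyz.ne, hxy.ne', hzx.ne]
  have h4 : (4 : ℕ∞) ≤ w.length := SimpleGraph.le_egirth.mp (le_of_eq hg.symm) x w hc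
  have h3 : w.length = 3 := by simp [hw]
  rw [h3] at h4
  norm_num at h4

/-- A 4-cycle through the edge `s(u,e)` uses another edge `s(u,f')` at `u`. -/
lemma other_edge {V : Type*} {X : SimpleGraph V} {C : Set (Sym2 V)} {u e : V}
    (hC : IsC4 X C) (he : s(u, e) ∈ C) :
    ∃ f', X.Adj u f' ∧ f' ≠ e ∧ s(u, f') ∈ C := by
  obtain ⟨a, b, c, d, hab, hac, had, hbc, hbd, hcd, Aab, Abc, Acd, Ada, rfl⟩ := hC
  simp only [Set.mem_insert_iff, Set.mem_singleton_iff, Sym2.eq_iff] at he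
  rcases he with (⟨rfl, rfl⟩ | ⟨rfl, rfl⟩) | (⟨rfl, rfl⟩ | ⟨rfl, rfl⟩) |
    (⟨rfl, rfl⟩ | ⟨rfl, rfl⟩) | (⟨rfl, rfl⟩ | ⟨rfl, rfl⟩)
  · exact ⟨d, Ada.symm, hbd.symm, by simp [Sym2.eq_swap]⟩
  · exact ⟨c, Abc, hac.symm, by simp⟩
  · exact ⟨a, Aab.symm, hac, by simp [Sym2.eq_swap]⟩
  · exact ⟨d, Acd, hbd.symm, by simp⟩
  · exact ⟨b, Abc.symm, hbd, by simp [Sym2.eq_swap]⟩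
  · exact ⟨a, Ada, hac, by simp⟩
  · exact ⟨c, Acd.symm, hac.symm, by simp [Sym2.eq_swap]⟩
  · exact ⟨b, Aab, hbd, by simp⟩

/-- Core contradiction at the edge `s(u,f')`. -/
lemma core {V : Type*} {X : SimpleGraph V}
    (hfreq : ∀ e ∈ X.edgeSet, cycle4Count X e = 2)
    {u v f' x y e : V} {C : Set (Sym2 V)}
    (huf : X.Adj u f') (hvf : X.Adj v f') (hux : X.Adj u x) (hvx : X.Adj v x)
    (huy : X.Adj u y) (hvy : X.Adj v y) (hfx : f' ≠ x) (hfy : f' ≠ y)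
    (hxy : x ≠ y) (huv : u ≠ v)
    (hef : e ≠ f') (hex : e ≠ x) (hey : e ≠ y) (hev : e ≠ v)
    (hCc4 : IsC4 X C) (heC : s(u, e) ∈ C) (hfC : s(u, f') ∈ C) : False := by
  have hcard : Nat.card {D : Set (Sym2 V) // IsC4 X D ∧ s(u, f') ∈ D} = 2 :=
    hfreq _ (X.mem_edgeSet.mpr huf)
  set Cx : Set (Sym2 V) := {s(u, f'), s(f', v), s(v, x), s(x, u)} with hCx
  set Cy : Set (Sym2 V) := {s(u, f'), s(f', v), s(v, y), s(y, u)} with hCy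
  have hCxc4 : IsC4 X Cx :=
    ⟨u, f', v, x, huf.ne, huv, hux.ne, hvf.ne', hfx, hvx.ne, huf, hvf.symm, hvx, hux.symm, rfl⟩
  have hCyc4 : IsC4 X Cy :=
    ⟨u, f', v, y, huf.ne, huv, huy.ne, hvf.ne', hfy, hvy.ne, huf, hvf.symm, hvy, huy.symm, rfl⟩
  have hufCx : s(u, f') ∈ Cx := by simp [hCx]
  have hufCy : s(u, f') ∈ Cy := by simp [hCy]
  have heNx : s(u, e) ∉ Cx := by
    simp [hCx, Sym2.eq_iff, hef, hex, hev, huf.ne, hux.ne, huv, Ne.symm hef, Ne.symm hex]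
  have heNy : s(u, e) ∉ Cy := by
    simp [hCy, Sym2.eq_iff, hef, hey, hev, huf.ne, huy.ne, huv, Ne.symm hef, Ne.symm hey]
  have hvxCx : s(v, x) ∈ Cx := by simp [hCx]
  have hvxNy : s(v, x) ∉ Cy := by
    simp [hCy, Sym2.eq_iff, huv, Ne.symm huv, hvf.ne, hvf.ne', hfx, Ne.symm hfx, hxy,
      Ne.symm hxy, hvy.ne, hvy.ne', hux.ne, hux.ne']
  obtain ⟨p, q, hpq, huniv⟩ := Nat.card_eq_two_iff.mp hcard
  have z1 : {D : Set (Sym2 V) // IsC4 X D ∧ s(u, f') ∈ D} := ⟨C, hCc4, hfC⟩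
  have z2 : {D : Set (Sym2 V) // IsC4 X D ∧ s(u, f') ∈ D} := ⟨Cx, hCxc4, hufCx⟩
  have z3 : {D : Set (Sym2 V) // IsC4 X D ∧ s(u, f') ∈ D} := ⟨Cy, hCyc4, hufCy⟩
  have h12 : (⟨C, hCc4, hfC⟩ : {D : Set (Sym2 V) // IsC4 X D ∧ s(u, f') ∈ D}) ≠
      ⟨Cx, hCxc4, hufCx⟩ := by
    intro h
    have hc : C = Cx := congrArg Subtype.val h
    rw [hc] at heC
    exact heNx heC
  have h13 : (⟨C, hCc4, hfC⟩ : {D : Set (Sym2 V) // IsC4 X D ∧ s(u, f') ∈ D}) ≠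
      ⟨Cy, hCyc4, hufCy⟩ := by
    intro h
    have hc : C = Cy := congrArg Subtype.val h
    rw [hc] at heC
    exact heNy heC
  have h23 : (⟨Cx, hCxc4, hufCx⟩ : {D : Set (Sym2 V) // IsC4 X D ∧ s(u, f') ∈ D}) ≠
      ⟨Cy, hCyc4, hufCy⟩ := by
    intro h
    have hc : Cx = Cy := congrArg Subtype.val h
    rw [hc] at hvxCx
    exact hvxNy hvxCx
  have m1 := huniv ▸ Set.mem_univ (⟨C, hCc4, hfC⟩ : {D : Set (Sym2 V) // IsC4 X D ∧ s(u, f') ∈ D})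
  have m2 := huniv ▸ Set.mem_univ (⟨Cx, hCxc4, hufCx⟩ : {D : Set (Sym2 V) // IsC4 X D ∧ s(u, f') ∈ D})
  have m3 := huniv ▸ Set.mem_univ (⟨Cy, hCyc4, hufCy⟩ : {D : Set (Sym2 V) // IsC4 X D ∧ s(u, f') ∈ D})
  simp only [Set.mem_insert_iff, Set.mem_singleton_iff] at m1 m2 m3
  rcases m1 with h1 | h1 <;> rcases m2 with h2 | h2 <;> rcases m3 with h3 | h3 <;>
    first
      | exact h12 (h1.trans h2.symm)
      | exact h13 (h1.trans h3.symm)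
      | exact h23 (h2.trans h3.symm)

/-- No two distinct vertices have three common neighbours. -/
lemma no_three {V : Type*} {X : SimpleGraph V} (hreg : FourRegular X)
    (hg : X.egirth = 4) (hfreq : ∀ e ∈ X.edgeSet, cycle4Count X e = 2)
    {u v a b c : V} (huv : u ≠ v) (hab : a ≠ b) (hac : a ≠ c) (hbc : b ≠ c)
    (hua : X.Adj u a) (hva : X.Adj v a) (hub : X.Adj u b) (hvb : X.Adj v b)
    (huc : X.Adj u c) (hvc : X.Adj v c) : False := by
  have tf := tri_free hg
  have hnuv : ¬ X.Adj u v := fun h => tf v a u hva hua.symm h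
  -- the neighbourhood of u is finite of size 4
  have hfinc : Finite (X.neighborSet u) := by
    refine (Nat.card_pos_iff.mp ?_).2
    rw [hreg u]; norm_num
  have hfinS : (X.neighborSet u).Finite := Set.finite_coe_iff.mp hfinc
  have hn4 : (X.neighborSet u).ncard = 4 := by
    rw [← Nat.card_coe_set_eq]; exact hreg u
  -- there is a fourth neighbour e of u
  have h3 : ({a, b, c} : Set V).ncard ≤ 3 := by
    have h1 := Set.ncard_insert_le a ({b, c} : Set V)
    have h2 := Set.ncard_insert_le b ({c} : Set V)
    simp only [Set.ncard_singleton] at h1 h2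
    omega
  obtain ⟨e, hemem, henot⟩ :=
    Set.exists_mem_notMem_of_ncard_lt_ncard (s := ({a, b, c} : Set V))
      (t := X.neighborSet u) (by omega) (Set.toFinite _)
  have hue : X.Adj u e := hemem
  simp only [Set.mem_insert_iff, Set.mem_singleton_iff, not_or] at henot
  obtain ⟨hea, heb, hec⟩ := henot
  have hev : e ≠ v := fun h => hnuv (h ▸ hue)
  -- the neighbourhood of u is exactly {a,b,c,e}
  have hsub : ({a, b, c, e} : Set V) ⊆ X.neighborSet u := by
    intro w hw
    simp only [Set.mem_insert_iff, Set.mem_singleton_iff] at hw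
    rcases hw with rfl | rfl | rfl | rfl
    exacts [hua, hub, huc, hue]
  have hc4 : ({a, b, c, e} : Set V).ncard = 4 := by
    rw [Set.ncard_insert_of_notMem (by simp [hab, hac, Ne.symm hea]) (Set.toFinite _),
      Set.ncard_insert_of_notMem (by simp [hbc, Ne.symm heb]) (Set.toFinite _),
      Set.ncard_insert_of_notMem (by simp [Ne.symm hec]) (Set.toFinite _),
      Set.ncard_singleton]
  have heq : ({a, b, c, e} : Set V) = X.neighborSet u :=
    Set.eq_of_subset_of_ncard_le hsub (by omega) hfinS
  -- there is a 4-cycle through s(u,e)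
  have hpos : 0 < Nat.card {D : Set (Sym2 V) // IsC4 X D ∧ s(u, e) ∈ D} := by
    have h2 := hfreq _ (X.mem_edgeSet.mpr hue)
    unfold cycle4Count at h2
    rw [h2]; norm_num
  obtain ⟨⟨C, hC4, heC⟩⟩ := (Nat.card_pos_iff.mp hpos).1
  obtain ⟨f', huf, hfe, hfC⟩ := other_edge hC4 heC
  have hfmem : f' ∈ ({a, b, c, e} : Set V) := heq ▸ (huf : f' ∈ X.neighborSet u)
  simp only [Set.mem_insert_iff, Set.mem_singleton_iff] at hfmem
  rcases hfmem with rfl | rfl | rfl | rfl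
  · exact core hfreq hua hva hub hvb huc hvc hab hac hbc huv
      (Ne.symm hfe) heb hec hev hC4 heC hfC
  · exact core hfreq hub hvb hua hva huc hvc (Ne.symm hab) hbc hac huv
      (Ne.symm hfe) hea hec hev hC4 heC hfC
  · exact core hfreq huc hvc hua hva hub hvb (Ne.symm hac) (Ne.symm hbc) hab huv
      (Ne.symm hfe) hea heb hev hC4 heC hfC
  · exact absurd rfl hfe

theorem stmt14 {V : Type*} (X : SimpleGraph V) (hreg : FourRegular X)
    (hg : X.egirth = 4) (het : EdgeTransitive X)
    (hfreq : ∀ e ∈ X.edgeSet, cycle4Count X e = 2) :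
    (¬ ∃ f : Fin 3 ⊕ Fin 2 → V, Function.Injective f ∧
        ∀ u v, (completeBipartiteGraph (Fin 3) (Fin 2)).Adj u v → X.Adj (f u) (f v)) ∧
    ∀ u v : V, u ≠ v → (X.neighborSet u ∩ X.neighborSet v).ncard ≤ 2 := by
  have key : ∀ u v : V, u ≠ v → (X.neighborSet u ∩ X.neighborSet v).ncard ≤ 2 := by
    intro u v huv
    by_contra h
    push_neg at h
    have hfinc : Finite (X.neighborSet u) := by
      refine (Nat.card_pos_iff.mp ?_).2
      rw [hreg u]; norm_num
    have hfin : (X.neighborSet u ∩ X.neighborSet v).Finite :=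
      Set.Finite.subset (Set.finite_coe_iff.mp hfinc) Set.inter_subset_left
    obtain ⟨a, ha, b, hb, c, hc, hab, hac, hbc⟩ := (Set.two_lt_ncard hfin).mp h
    obtain ⟨hua, hva⟩ := ha
    obtain ⟨hub, hvb⟩ := hb
    obtain ⟨huc, hvc⟩ := hc
    exact no_three hreg hg hfreq huv hab hac hbc hua hva hub hvb huc hvc
  refine ⟨?_, key⟩
  rintro ⟨f, hinj, hadj⟩
  have huv : f (Sum.inr 0) ≠ f (Sum.inr 1) := fun h => by
    have := hinj h; simp at this
  have hab : f (Sum.inl 0) ≠ f (Sum.inl 1) := fun h => by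
    have := hinj h; simp at this
  have hac : f (Sum.inl 0) ≠ f (Sum.inl 2) := fun h => by
    have := hinj h; simp at this
  have hbc : f (Sum.inl 1) ≠ f (Sum.inl 2) := fun h => by
    have := hinj h; simp at this
  have adj : ∀ (i : Fin 3) (j : Fin 2), X.Adj (f (Sum.inr j)) (f (Sum.inl i)) :=
    fun i j => (hadj (Sum.inl i) (Sum.inr j) (by simp)).symm
  exact no_three hreg hg hfreq huv hab hac hbc
    (adj 0 0) (adj 0 1) (adj 1 0) (adj 1 1) (adj 2 0) (adj 2 1)
end
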